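/- Matrix elements of multiplication: let r ≥ 0, δ > 0 and b₀ ∈ H^{r+1+δ}_x (spherically symmetric Sobolev space). Then for all j, k ∈ ℕ, |⟨b₀ e_j, e_k⟩| ≤ c(δ)‖b₀‖_{H^{r+1+δ}_x}(⟨k-j⟩^{-r} + (ω_j+ω_k)^{-r}), where the inner product is taken in L²([0,π], sin²(x)(2/π)dx), ω_n = n+1, and c(δ) is the embedding constant of H^{r+1+δ}_x into H^r(S¹). -/

import Mathlib

/-!
Expanding `b₀ = ∑ bᵢ eᵢ`, the matrix element becomes `∑ bᵢ ⟨eᵢ e_j, e_k⟩`; the interchange of sum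
and integral is dominated convergence, as `∑ |bᵢ| < ∞` by Cauchy–Schwarz. Since
`eᵢ(x) = ∑_{l ≤ i} cos((i - 2l)x)` and `2 sin((j+1)x) sin((k+1)x) = cos((j-k)x) - cos((j+k+2)x)`,
orthogonality of the cosines on `[0, π]` gives `|⟨eᵢ e_j, e_k⟩| ≤ 1`, and `⟨eᵢ e_j, e_k⟩ = 0`
unless `i ≥ |k - j|`. Cauchy–Schwarz with the weights `(i+1)^{±(r+1+δ)}` over `i ≥ |k - j|` then
bounds the sum by `‖b₀‖ ⟨k-j⟩^{-r} (∑ (i+1)^{-1-2δ})^{1/2}`.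
-/

/-- The spherically symmetric eigenfunctions `e_j(x) = sin((j+1)x)/sin x` on `(0,π)`. -/
noncomputable def sphEig (j : ℕ) (x : ℝ) : ℝ := Real.sin (((j : ℝ) + 1) * x) / Real.sin x

/-- The embedding constant `c(δ) = √(2π) (∑_j (j+1)^{-1-2δ})^{1/2}` of `H^{r+1+δ}_x` into
`H^r(S¹,dx)`. -/
noncomputable def embConst (δ : ℝ) : ℝ :=
  Real.sqrt (2 * Real.pi) * Real.sqrt (∑' j : ℕ, ((j : ℝ) + 1) ^ (-(1 + 2 * δ)))

open Real Finset MeasureTheory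

/-- The Chebyshev polynomial `Uᵢ(cos x)`, i.e. `eᵢ` written as a finite cosine series. -/
noncomputable def cosSum (i : ℕ) (x : ℝ) : ℝ :=
  ∑ l ∈ range (i + 1), cos (((i : ℝ) - 2 * l) * x)

lemma sin_mul_cosSum (i : ℕ) (x : ℝ) : sin x * cosSum i x = sin ((i + 1) * x) := by
  let f : ℕ → ℝ := fun l => sin (((i : ℝ) + 1 - 2 * l) * x) / 2
  have htelescope : ∀ l : ℕ, sin x * cos (((i : ℝ) - 2 * l) * x) = f l - f (l + 1) := by
    intro l
    simp only [f, Nat.cast_add, Nat.cast_one]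
    rw [show ((i : ℝ) + 1 - 2 * l) * x = x + ((i : ℝ) - 2 * l) * x by ring,
      show ((i : ℝ) + 1 - 2 * (l + 1)) * x = -(x - ((i : ℝ) - 2 * l) * x) by ring,
      sin_add, sin_neg, sin_sub]
    ring
  rw [cosSum, mul_sum, sum_congr rfl fun l _ => htelescope l, sum_range_sub']
  simp only [f]
  push_cast
  rw [show ((i : ℝ) + 1 - 2 * (i + 1)) * x = -((i + 1) * x) by ring, sin_neg]
  ring_nf

lemma sin_nat_succ_mul_eq_zero {x : ℝ} (hx : sin x = 0) (n : ℕ) : sin ((n + 1) * x) = 0 := by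
  rw [← sin_mul_cosSum, hx, zero_mul]

lemma sphEig_eq_cosSum {x : ℝ} (hx : sin x ≠ 0) (i : ℕ) : sphEig i x = cosSum i x := by
  rw [sphEig, ← sin_mul_cosSum, mul_div_cancel_left₀ _ hx]

lemma sphEig_mul_sin_eq_cosSum_mul_sin (i j : ℕ) (x : ℝ) :
    sphEig i x * sin ((j + 1) * x) = cosSum i x * sin ((j + 1) * x) := by
  by_cases hx : sin x = 0
  · simp [sin_nat_succ_mul_eq_zero hx]
  · rw [sphEig_eq_cosSum hx]

lemma sphEig_mul_sphEig_mul_sin_sq (j k : ℕ) (x : ℝ) :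
    sphEig j x * sphEig k x * sin x ^ 2 = sin ((j + 1) * x) * sin ((k + 1) * x) := by
  by_cases hx : sin x = 0
  · simp [hx, sin_nat_succ_mul_eq_zero hx]
  · rw [sphEig, sphEig]
    field_simp

lemma abs_sin_nat_mul_le (n : ℕ) (x : ℝ) : |sin (n * x)| ≤ n * |sin x| := by
  induction n with
  | zero => simp
  | succ n ih =>
    push_cast
    calc |sin ((n + 1) * x)| = |sin (n * x) * cos x + cos (n * x) * sin x| := by
          rw [add_mul, one_mul, sin_add]
      _ ≤ |sin (n * x)| * |cos x| + |cos (n * x)| * |sin x| := by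
          rw [← abs_mul, ← abs_mul]; exact abs_add_le _ _
      _ ≤ n * |sin x| * 1 + 1 * |sin x| := by
          gcongr
          exacts [abs_cos_le_one x, abs_cos_le_one _]
      _ = (n + 1) * |sin x| := by ring

lemma abs_sphEig_mul_sin_le (i j : ℕ) (x : ℝ) : |sphEig i x * sin ((j + 1) * x)| ≤ j + 1 := by
  by_cases hx : sin x = 0
  · simp only [sin_nat_succ_mul_eq_zero hx, mul_zero, abs_zero]
    positivity
  · have hj : |sin ((j + 1) * x)| ≤ (j + 1) * |sin x| := by
      simpa using abs_sin_nat_mul_le (j + 1) x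
    rw [sphEig, div_mul_eq_mul_div, abs_div, div_le_iff₀ (abs_pos.mpr hx), abs_mul]
    calc |sin ((i + 1) * x)| * |sin ((j + 1) * x)| ≤ 1 * ((j + 1) * |sin x|) := by
          gcongr
          exact abs_sin_le_one _
      _ = (j + 1) * |sin x| := one_mul _

lemma integral_cos_int_mul (p : ℤ) :
    ∫ x in (0 : ℝ)..π, cos (p * x) = if p = 0 then π else 0 := by
  split_ifs with hp
  · simp [hp]
  · rw [intervalIntegral.integral_comp_mul_left cos (Int.cast_ne_zero.mpr hp)]
    simp [sin_int_mul_pi]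

lemma integral_cos_int_mul_mul_cos_int_mul (m n : ℤ) :
    ∫ x in (0 : ℝ)..π, cos (m * x) * cos (n * x)
      = π / 2 * ((if m = n then 1 else 0) + (if m = -n then 1 else 0)) := by
  have h : ∀ x : ℝ,
      cos (m * x) * cos (n * x) = (cos ((m - n : ℤ) * x) + cos ((m + n : ℤ) * x)) / 2 := by
    intro x
    push_cast
    rw [sub_mul, add_mul, ← two_mul_cos_mul_cos]
    ring
  simp_rw [h]
  rw [intervalIntegral.integral_div,
    intervalIntegral.integral_add (Continuous.intervalIntegrable (by fun_prop) _ _)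
      (Continuous.intervalIntegrable (by fun_prop) _ _),
    integral_cos_int_mul, integral_cos_int_mul]
  simp only [sub_eq_zero, add_eq_zero_iff_eq_neg]
  split_ifs <;> ring

noncomputable def cosCoeff (i : ℕ) (n : ℤ) : ℝ := ∫ x in (0 : ℝ)..π, cosSum i x * cos (n * x)

lemma cosCoeff_eq (i : ℕ) (n : ℤ) :
    cosCoeff i n = π / 2 * (#{l ∈ range (i + 1) | (i : ℤ) - 2 * (l : ℕ) = n}
      + #{l ∈ range (i + 1) | (i : ℤ) - 2 * (l : ℕ) = -n}) := by
  have hterm : ∀ l : ℕ, ∫ x in (0 : ℝ)..π, cos (((i : ℝ) - 2 * l) * x) * cos (n * x)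
      = π / 2 * ((if (i : ℤ) - 2 * (l : ℕ) = n then 1 else 0)
        + (if (i : ℤ) - 2 * (l : ℕ) = -n then 1 else 0)) := fun l => by
    rw [← integral_cos_int_mul_mul_cos_int_mul]
    push_cast
    rfl
  simp only [cosCoeff, cosSum, sum_mul]
  rw [intervalIntegral.integral_finsetSum
    fun l _ => Continuous.intervalIntegrable (by fun_prop) _ _]
  simp_rw [hterm]
  rw [← mul_sum, sum_add_distrib, sum_boole, sum_boole]

lemma card_filter_sub_two_mul_eq_le_one (i : ℕ) (n : ℤ) :
    #{l ∈ range (i + 1) | (i : ℤ) - 2 * (l : ℕ) = n} ≤ 1 :=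
  card_le_one.mpr fun a ha b hb => by
    simp only [mem_filter] at ha hb
    omega

lemma filter_sub_two_mul_eq_eq_empty {i : ℕ} {n : ℤ} (h : i < |n|) :
    {l ∈ range (i + 1) | (i : ℤ) - 2 * (l : ℕ) = n} = ∅ :=
  filter_eq_empty_iff.mpr fun l hl => by
    rw [mem_range] at hl
    rw [lt_abs] at h
    omega

lemma cosCoeff_nonneg (i : ℕ) (n : ℤ) : 0 ≤ cosCoeff i n := by
  rw [cosCoeff_eq]
  positivity

lemma cosCoeff_le_pi (i : ℕ) (n : ℤ) : cosCoeff i n ≤ π := by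
  have h₁ : (#{l ∈ range (i + 1) | (i : ℤ) - 2 * (l : ℕ) = n} : ℝ) ≤ 1 := by
    exact_mod_cast card_filter_sub_two_mul_eq_le_one i n
  have h₂ : (#{l ∈ range (i + 1) | (i : ℤ) - 2 * (l : ℕ) = -n} : ℝ) ≤ 1 := by
    exact_mod_cast card_filter_sub_two_mul_eq_le_one i (-n)
  rw [cosCoeff_eq]
  nlinarith [pi_pos]

lemma cosCoeff_eq_zero {i : ℕ} {n : ℤ} (h : i < |n|) : cosCoeff i n = 0 := by
  rw [cosCoeff_eq, filter_sub_two_mul_eq_eq_empty h,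
    filter_sub_two_mul_eq_eq_empty (by rwa [abs_neg])]
  simp

/-- `(π/2) ⟨eᵢ e_j, e_k⟩`, by `sphEig_mul_sphEig_mul_sin_sq`. -/
noncomputable def eigTriple (i j k : ℕ) : ℝ :=
  ∫ x in (0 : ℝ)..π, sphEig i x * (sin ((j + 1) * x) * sin ((k + 1) * x))

lemma eigTriple_eq (i j k : ℕ) :
    eigTriple i j k = (cosCoeff i ((j : ℤ) - k) - cosCoeff i (j + k + 2)) / 2 := by
  have h : ∀ x, sphEig i x * (sin ((j + 1) * x) * sin ((k + 1) * x))
      = (cosSum i x * cos (((j : ℤ) - k : ℤ) * x)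
          - cosSum i x * cos ((j + k + 2 : ℤ) * x)) / 2 := by
    intro x
    rw [← mul_assoc, sphEig_mul_sin_eq_cosSum_mul_sin, mul_assoc, ← mul_sub]
    push_cast
    rw [show ((j : ℝ) - k) * x = (j + 1) * x - (k + 1) * x by ring,
      show ((j : ℝ) + k + 2) * x = (j + 1) * x + (k + 1) * x by ring, ← two_mul_sin_mul_sin]
    ring
  simp_rw [eigTriple, h]
  rw [intervalIntegral.integral_div, intervalIntegral.integral_sub
    (Continuous.intervalIntegrable (by unfold cosSum; fun_prop) _ _)
    (Continuous.intervalIntegrable (by unfold cosSum; fun_prop) _ _)]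
  rfl

lemma abs_eigTriple_le (i j k : ℕ) : |eigTriple i j k| ≤ π / 2 := by
  rw [eigTriple_eq, abs_le]
  have := cosCoeff_nonneg i ((j : ℤ) - k); have := cosCoeff_le_pi i ((j : ℤ) - k)
  have := cosCoeff_nonneg i (j + k + 2); have := cosCoeff_le_pi i (j + k + 2)
  constructor <;> linarith

lemma eigTriple_eq_zero {i j k : ℕ} (h : (i : ℝ) < |(k : ℝ) - j|) : eigTriple i j k = 0 := by
  have hi : (i : ℤ) < |(k : ℤ) - j| := by exact_mod_cast h
  have hjk : |(k : ℤ) - j| ≤ j + k := abs_le.mpr ⟨by omega, by omega⟩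
  rw [eigTriple_eq, cosCoeff_eq_zero (by rwa [abs_sub_comm]),
    cosCoeff_eq_zero (by rw [abs_of_nonneg (by positivity)]; omega)]
  simp

lemma hasSum_integral_mul_sin_mul_sin {b0 : ℝ → ℝ} {bc : ℕ → ℝ}
    (hb : ∀ x ∈ Set.Ioo 0 π, b0 x = ∑' i, bc i * sphEig i x)
    (hbc : Summable fun i => |bc i|) (j k : ℕ) :
    HasSum (fun i => bc i * eigTriple i j k)
      (∫ x in (0 : ℝ)..π, b0 x * (sin ((j + 1) * x) * sin ((k + 1) * x))) := by
  set F : ℕ → ℝ → ℝ := fun i x => bc i * (sphEig i x * sin ((j + 1) * x) * sin ((k + 1) * x))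
  have hF : ∀ i x, ‖F i x‖ ≤ |bc i| * (j + 1) := fun i x => by
    rw [Real.norm_eq_abs, abs_mul, abs_mul]
    gcongr
    calc |sphEig i x * sin ((j + 1) * x)| * |sin ((k + 1) * x)|
        ≤ (j + 1) * 1 := by gcongr; exacts [abs_sphEig_mul_sin_le i j x, abs_sin_le_one _]
      _ = j + 1 := mul_one _
  have hlim : ∀ x ∈ Set.Ioo 0 π,
      HasSum (fun i => F i x) (b0 x * (sin ((j + 1) * x) * sin ((k + 1) * x))) := by
    intro x hx
    have htsum : ∑' i, F i x = b0 x * (sin ((j + 1) * x) * sin ((k + 1) * x)) := by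
      rw [hb x hx, ← tsum_mul_right]
      exact tsum_congr fun i => by simp only [F]; ring
    exact htsum ▸ ((hbc.mul_right ((j : ℝ) + 1)).of_norm_bounded (hF · x)).hasSum
  have key := intervalIntegral.hasSum_integral_of_dominated_convergence (μ := volume)
    (fun i _ => |bc i| * (j + 1))
    (fun i => by unfold F sphEig; fun_prop)
    (fun i => ae_of_all _ fun x _ => hF i x)
    (ae_of_all _ fun _ _ => hbc.mul_right _)
    intervalIntegrable_const
    (by
      filter_upwards [Measure.ae_ne volume π] with x hxπ hx
      rw [Set.uIoc_of_le pi_pos.le] at hx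
      exact hlim x ⟨hx.1, lt_of_le_of_ne hx.2 hxπ⟩)
  simpa only [F, intervalIntegral.integral_const_mul, eigTriple, mul_assoc] using key

lemma summable_mul_and_tsum_mul_le_sqrt_mul_sqrt {ι : Type*} {f g : ι → ℝ}
    (hf : ∀ i, 0 ≤ f i) (hg : ∀ i, 0 ≤ g i)
    (hf2 : Summable fun i => f i ^ 2) (hg2 : Summable fun i => g i ^ 2) :
    (Summable fun i => f i * g i) ∧
      ∑' i, f i * g i ≤ √(∑' i, f i ^ 2) * √(∑' i, g i ^ 2) := by
  have := Real.summable_and_inner_le_Lp_mul_Lq_tsum_of_nonneg HolderConjugate.two_two hf hg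
    (by simpa only [rpow_two] using hf2) (by simpa only [rpow_two] using hg2)
  simpa only [rpow_two, sqrt_eq_rpow] using this

lemma summable_nat_add_one_rpow {q : ℝ} (hq : q < -1) :
    Summable fun n : ℕ => ((n : ℝ) + 1) ^ q := by
  simpa using (summable_nat_add_iff 1).mpr (summable_nat_rpow.mpr hq)

lemma rpow_sq {x : ℝ} (hx : 0 ≤ x) (s : ℝ) : (x ^ s) ^ 2 = x ^ (2 * s) := by
  rw [← rpow_mul_natCast hx, Nat.cast_ofNat, mul_comm]

lemma summable_abs_of_summable_sq_mul_rpow {a : ℕ → ℝ} {s : ℝ} (hs : 1 / 2 < s)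
    (ha : Summable fun n => a n ^ 2 * ((n : ℝ) + 1) ^ (2 * s)) : Summable fun n => |a n| := by
  have hpos : ∀ n : ℕ, (0 : ℝ) < n + 1 := fun n => by positivity
  have hcs := (summable_mul_and_tsum_mul_le_sqrt_mul_sqrt
    (f := fun n => |a n| * ((n : ℝ) + 1) ^ s) (g := fun n => ((n : ℝ) + 1) ^ (-s))
    (fun n => by positivity) (fun n => by positivity)
    (by simpa only [mul_pow, sq_abs, rpow_sq (hpos _).le] using ha)
    (by
      simp only [rpow_sq (hpos _).le]
      exact summable_nat_add_one_rpow (by linarith))).1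
  refine hcs.congr fun n => ?_
  rw [mul_assoc, ← rpow_add (hpos n), add_neg_cancel, rpow_zero, mul_one]

lemma rpow_neg_two_mul_le {x M r δ : ℝ} (hr : 0 ≤ r) (hM : 0 < M) (hMx : M ≤ x) (hx : 1 ≤ x) :
    x ^ (-(2 * (r + 1 + δ))) ≤ (M ^ (-r)) ^ 2 * x ^ (-(1 + 2 * δ)) := by
  have hx0 : 0 < x := by linarith
  rw [rpow_sq hM.le, show -(2 * (r + 1 + δ)) = 2 * -r + -(2 + 2 * δ) by ring,
    rpow_add hx0]
  exact mul_le_mul (rpow_le_rpow_of_nonpos hM hMx (by linarith))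
    (rpow_le_rpow_of_exponent_le hx (by linarith)) (by positivity) (by positivity)

lemma abs_tsum_mul_le_of_sobolev {a τ : ℕ → ℝ} {r δ M : ℝ} (hr : 0 ≤ r) (hδ : 0 < δ)
    (hM : 0 < M) (hτ : ∀ n, |τ n| ≤ 1) (hτM : ∀ n, τ n ≠ 0 → M ≤ n + 1)
    (ha : Summable fun n => a n ^ 2 * ((n : ℝ) + 1) ^ (2 * (r + 1 + δ))) :
    |∑' n, a n * τ n| ≤ √(∑' n : ℕ, ((n : ℝ) + 1) ^ (-(1 + 2 * δ))) *
      √(∑' n, a n ^ 2 * ((n : ℝ) + 1) ^ (2 * (r + 1 + δ))) * M ^ (-r) := by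
  set s := r + 1 + δ
  set w : ℕ → ℝ := fun n => ((n : ℝ) + 1) ^ (-(1 + 2 * δ))
  have hpos : ∀ n : ℕ, (0 : ℝ) < n + 1 := fun n => by positivity
  set f : ℕ → ℝ := fun n => |a n| * ((n : ℝ) + 1) ^ s
  set g : ℕ → ℝ := fun n => ((n : ℝ) + 1) ^ (-s) * |τ n|
  have hfg : ∀ n, f n * g n = |a n * τ n| := fun n => by
    have hone : ((n : ℝ) + 1) ^ s * ((n : ℝ) + 1) ^ (-s) = 1 := by
      rw [← rpow_add (hpos n), add_neg_cancel, rpow_zero]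
    simp only [f, g, abs_mul]
    linear_combination (|a n| * |τ n|) * hone
  have hf2 : ∀ n, f n ^ 2 = a n ^ 2 * ((n : ℝ) + 1) ^ (2 * s) := fun n => by
    simp only [f, mul_pow, sq_abs, rpow_sq (hpos n).le]
  have hg2 : ∀ n, g n ^ 2 ≤ (M ^ (-r)) ^ 2 * w n := fun n => by
    by_cases hτn : τ n = 0
    · rw [show g n = 0 by simp only [g, hτn, abs_zero, mul_zero], zero_pow two_ne_zero]
      positivity
    calc g n ^ 2 = ((n : ℝ) + 1) ^ (-(2 * s)) * |τ n| ^ 2 := by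
          rw [mul_pow, rpow_sq (hpos n).le, mul_neg]
      _ ≤ ((n : ℝ) + 1) ^ (-(2 * s)) * 1 := by
          gcongr
          exact pow_le_one₀ (abs_nonneg _) (hτ n)
      _ ≤ (M ^ (-r)) ^ 2 * w n := by
          rw [mul_one]
          exact rpow_neg_two_mul_le hr hM (hτM n hτn) (by simp)
  have hw : Summable fun n => (M ^ (-r)) ^ 2 * w n :=
    (summable_nat_add_one_rpow (by linarith)).mul_left _
  have hg2sum : Summable fun n => g n ^ 2 := .of_nonneg_of_le (fun n => sq_nonneg _) hg2 hw
  obtain ⟨hsum, hle⟩ := summable_mul_and_tsum_mul_le_sqrt_mul_sqrt (f := f) (g := g)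
    (fun n => by positivity) (fun n => by positivity) (by simpa only [hf2] using ha) hg2sum
  simp only [hfg, hf2] at hsum hle
  calc |∑' n, a n * τ n| ≤ ∑' n, |a n * τ n| := by
        simpa only [Real.norm_eq_abs] using norm_tsum_le_tsum_norm (f := fun n => a n * τ n)
          (by simpa only [Real.norm_eq_abs] using hsum)
    _ ≤ √(∑' n, a n ^ 2 * ((n : ℝ) + 1) ^ (2 * s)) * √(∑' n, g n ^ 2) := hle
    _ ≤ √(∑' n, a n ^ 2 * ((n : ℝ) + 1) ^ (2 * s)) * √((M ^ (-r)) ^ 2 * ∑' n, w n) := by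
        gcongr
        rw [← tsum_mul_left]
        exact hg2sum.tsum_le_tsum hg2 hw
    _ = √(∑' n, w n) * √(∑' n, a n ^ 2 * ((n : ℝ) + 1) ^ (2 * s)) * M ^ (-r) := by
        rw [sqrt_mul (sq_nonneg _), sqrt_sq (rpow_nonneg hM.le _)]
        ring

/-- matrix elements of multiplication: for `b₀ ∈ H^{r+1+δ}_x` (given through
its coefficients `bc`), for all `j,k`,
`|⟨b₀ e_j, e_k⟩| ≤ c(δ) ‖b₀‖_{H^{r+1+δ}_x} (⟨k-j⟩^{-r} + (ω_j+ω_k)^{-r})`,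
the inner product being that of `L²([0,π], sin²x (2/π)dx)`. -/
theorem stmt13 (r δ : ℝ) (hr : 0 ≤ r) (hδ : 0 < δ) (b0 : ℝ → ℝ) (bc : ℕ → ℝ)
    (hb : ∀ x ∈ Set.Ioo 0 Real.pi, b0 x = ∑' j : ℕ, bc j * sphEig j x)
    (hsum : Summable fun j : ℕ => bc j ^ 2 * ((j : ℝ) + 1) ^ (2 * (r + 1 + δ)))
    (j k : ℕ) :
    |(2 / Real.pi) * ∫ x in (0:ℝ)..Real.pi, b0 x * sphEig j x * sphEig k x * Real.sin x ^ 2|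
      ≤ embConst δ *
          Real.sqrt (∑' i : ℕ, bc i ^ 2 * ((i : ℝ) + 1) ^ (2 * (r + 1 + δ))) *
          ((max 1 |(k : ℝ) - (j : ℝ)|) ^ (-r) + ((j : ℝ) + (k : ℝ) + 2) ^ (-r)) := by
  have hbc := summable_abs_of_summable_sq_mul_rpow (by linarith) hsum
  have hexpand : (2 / π) * ∫ x in (0 : ℝ)..π, b0 x * sphEig j x * sphEig k x * sin x ^ 2
      = ∑' i, bc i * ((2 / π) * eigTriple i j k) := by
    simp_rw [mul_assoc (b0 _), sphEig_mul_sphEig_mul_sin_sq,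
      ← (hasSum_integral_mul_sin_mul_sin hb hbc j k).tsum_eq, ← tsum_mul_left, mul_left_comm]
  have hτ : ∀ i, |(2 / π) * eigTriple i j k| ≤ 1 := fun i => by
    calc |(2 / π) * eigTriple i j k| = 2 / π * |eigTriple i j k| := by
          rw [abs_mul, abs_of_pos (by positivity)]
      _ ≤ 2 / π * (π / 2) := by gcongr; exact abs_eigTriple_le i j k
      _ = 1 := by field_simp
  have hτM : ∀ i : ℕ, (2 / π) * eigTriple i j k ≠ 0 → max 1 |(k : ℝ) - j| ≤ i + 1 :=
    fun i hi => max_le (by simp) (by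
      by_contra h
      exact hi (by rw [eigTriple_eq_zero (by linarith), mul_zero]))
  rw [hexpand]
  calc _ ≤ 1 * (√(∑' n : ℕ, ((n : ℝ) + 1) ^ (-(1 + 2 * δ))) *
            √(∑' i, bc i ^ 2 * ((i : ℝ) + 1) ^ (2 * (r + 1 + δ)))) *
          (max 1 |(k : ℝ) - j|) ^ (-r) := by
        rw [one_mul]
        exact abs_tsum_mul_le_of_sobolev hr hδ (by positivity) hτ hτM hsum
    _ ≤ _ := by
        rw [embConst, mul_assoc √(2 * π)]
        gcongr
        · exact one_le_sqrt.mpr (by linarith [pi_gt_three])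
        · exact le_add_of_nonneg_right (by positivity)
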